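/- Let Λ be a finite index set, p : Λ → ℝ with p(λ) ≥ 0 and ∑_λ p(λ) = 1, let ρ_λ be 2×2 density matrices for each λ ∈ Λ, and let q_x, q_y : Λ → ℝ with 0 ≤ q_x(λ) ≤ 1 and 0 ≤ q_y(λ) ≤ 1. Define the local-hidden-state ensemble averages σ₊ˣ = ∑_λ p(λ)·q_x(λ)·ρ_λ, σ₋ˣ = ∑_λ p(λ)·(1 − q_x(λ))·ρ_λ, σ₊ʸ = ∑_λ p(λ)·q_y(λ)·ρ_λ, σ₋ʸ = ∑_λ p(λ)·(1 − q_y(λ))·ρ_λ. Then 𝓘ʸ(σ₊ˣ) + 𝓘ʸ(σ₋ˣ) + 𝓘ˣ(σ₊ʸ) + 𝓘ˣ(σ₋ʸ) ≤ √2. (This is the imaginarity steering inequality: any assemblage admitting a local hidden state model satisfies it.) -/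

import Mathlib

/-!
Both robustnesses of a 2×2 matrix only see its off-diagonal entries: 𝓘ʸ(σ) = |σ₀₁ + σ₁₀| and
𝓘ˣ(σ) = |σ₁₀ − σ₀₁|. These are seminorms of σ, so each term of the inequality is at most the
corresponding p(λ)q(λ)- or p(λ)(1 − q(λ))-average over the hidden states, and since q + (1 − q) = 1
the left-hand side is at most ∑ p(λ) (𝓘ˣ(ρ_λ) + 𝓘ʸ(ρ_λ)). For a density matrix with off-diagonal
entry z this is 2(|Re z| + |Im z|) ≤ 2√2 |z| ≤ √2, because |z|² ≤ ρ₀₀ρ₁₁ ≤ 1/4.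
-/

open Matrix Kronecker
open scoped ComplexOrder

/-- Trace norm of a square complex matrix: `Tr[sqrt(Aᴴ A)]`. -/
noncomputable def traceNorm {n : Type*} [Fintype n] [DecidableEq n]
    (A : Matrix n n ℂ) : ℝ :=
  (((Matrix.posSemidef_conjTranspose_mul_self A).1.eigenvectorUnitary.1 *
      Matrix.diagonal (fun i => ((Real.sqrt ((Matrix.posSemidef_conjTranspose_mul_self A).1.eigenvalues i) : ℝ) : ℂ)) *
      (star (Matrix.posSemidef_conjTranspose_mul_self A).1.eigenvectorUnitary :
        Matrix n n ℂ)).trace).re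

/-- Robustness of imaginarity: `(1/2) ‖ρ - ρᵀ‖₁`. -/
noncomputable def roi {n : Type*} [Fintype n] [DecidableEq n]
    (ρ : Matrix n n ℂ) : ℝ :=
  (1 / 2) * traceNorm (ρ - ρ.transpose)

/-- Hadamard matrix (x-basis change). -/
noncomputable def Hm : Matrix (Fin 2) (Fin 2) ℂ :=
  (Real.sqrt 2 : ℂ)⁻¹ • !![1, 1; 1, -1]
/-- Eigenvector matrix of σy (y-basis change). -/
noncomputable def Vm : Matrix (Fin 2) (Fin 2) ℂ :=
  (Real.sqrt 2 : ℂ)⁻¹ • !![1, 1; Complex.I, -Complex.I]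

/-- Robustness of imaginarity in the x-basis. -/
noncomputable def roiX (σ : Matrix (Fin 2) (Fin 2) ℂ) : ℝ := roi (Hm * σ * Hm)
/-- Robustness of imaginarity in the y-basis. -/
noncomputable def roiY (σ : Matrix (Fin 2) (Fin 2) ℂ) : ℝ := roi (Vmᴴ * σ * Vm)

lemma traceNorm_eq_sum_sqrt_eigenvalues {n : Type*} [Fintype n] [DecidableEq n]
    (A : Matrix n n ℂ) :
    traceNorm A = ∑ i, √((posSemidef_conjTranspose_mul_self A).1.eigenvalues i) := by
  rw [traceNorm, trace_mul_cycle, Unitary.coe_star_mul_self, one_mul, trace_diagonal,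
    ← Complex.ofReal_sum, Complex.ofReal_re]

lemma Matrix.IsHermitian.eigenvalues_eq_of_eq_smul_one {n : Type*} [Fintype n] [DecidableEq n]
    {A : Matrix n n ℂ} (hA : A.IsHermitian) {r : ℝ} (h : A = (r : ℂ) • 1) (i : n) :
    hA.eigenvalues i = r := by
  subst h
  have hv := hA.mulVec_eigenvectorBasis i
  rw [smul_mulVec, one_mulVec] at hv
  have hne : (⇑(hA.eigenvectorBasis i) : n → ℂ) ≠ 0 := by
    simpa using hA.eigenvectorBasis.orthonormal.ne_zero i
  rw [← Complex.coe_smul] at hv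
  exact_mod_cast (smul_left_injective ℂ hne hv).symm

lemma traceNorm_of_conjTranspose_mul_self_eq_smul_one {n : Type*} [Fintype n] [DecidableEq n]
    (A : Matrix n n ℂ) {r : ℝ} (h : Aᴴ * A = (r : ℂ) • 1) :
    traceNorm A = Fintype.card n * √r := by
  simp [traceNorm_eq_sum_sqrt_eigenvalues,
    (posSemidef_conjTranspose_mul_self A).1.eigenvalues_eq_of_eq_smul_one h]

lemma traceNorm_fin_two_skew (x : ℂ) : traceNorm !![0, x; -x, 0] = 2 * ‖x‖ := by
  have h : (!![0, x; -x, 0])ᴴ * !![0, x; -x, 0] =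
      ((‖x‖ ^ 2 : ℝ) : ℂ) • (1 : Matrix (Fin 2) (Fin 2) ℂ) := by
    ext i j
    fin_cases i <;> fin_cases j <;>
      simp [mul_apply, Fin.sum_univ_two, Complex.sq_norm, Complex.normSq_eq_conj_mul_self]
  rw [traceNorm_of_conjTranspose_mul_self_eq_smul_one _ h, Real.sqrt_sq (norm_nonneg x)]
  simp

lemma roi_fin_two (M : Matrix (Fin 2) (Fin 2) ℂ) : roi M = ‖M 0 1 - M 1 0‖ := by
  have h : M - Mᵀ = !![0, M 0 1 - M 1 0; -(M 0 1 - M 1 0), 0] := by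
    ext i j
    fin_cases i <;> fin_cases j <;> simp
  rw [roi, h, traceNorm_fin_two_skew]
  ring

lemma ofReal_sqrt_two_ne_zero : (√2 : ℂ) ≠ 0 := by
  exact_mod_cast (Real.sqrt_pos.2 two_pos).ne'

lemma ofReal_sqrt_two_mul_self : (√2 : ℂ) * √2 = 2 := by
  norm_cast
  exact Real.mul_self_sqrt zero_le_two

lemma roiX_eq (σ : Matrix (Fin 2) (Fin 2) ℂ) : roiX σ = ‖σ 1 0 - σ 0 1‖ := by
  rw [roiX, roi_fin_two]
  congr 1
  simp only [Hm, mul_apply, Fin.sum_univ_two, Matrix.smul_apply, smul_eq_mul, cons_val', cons_val_zero,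
    cons_val_one, empty_val', cons_val_fin_one, of_apply]
  field_simp [ofReal_sqrt_two_ne_zero]
  linear_combination (σ 0 1 - σ 1 0) * ofReal_sqrt_two_mul_self

lemma roiY_eq (σ : Matrix (Fin 2) (Fin 2) ℂ) : roiY σ = ‖σ 0 1 + σ 1 0‖ := by
  rw [roiY, roi_fin_two]
  have hentry : (Vmᴴ * σ * Vm) 0 1 - (Vmᴴ * σ * Vm) 1 0 = -Complex.I * (σ 0 1 + σ 1 0) := by
    simp only [Vm, conjTranspose_smul, conjTranspose_apply, mul_apply, Fin.sum_univ_two,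
      Matrix.smul_apply, smul_eq_mul, cons_val', cons_val_zero, cons_val_one, empty_val',
      cons_val_fin_one, of_apply, star_inv₀, RCLike.star_def, Complex.conj_ofReal,
      Complex.conj_I, map_one, map_neg, mul_one, mul_neg, neg_mul, neg_neg]
    field_simp [ofReal_sqrt_two_ne_zero]
    linear_combination Complex.I * (σ 0 1 + σ 1 0) * ofReal_sqrt_two_mul_self
  rw [hentry, norm_mul, norm_neg, Complex.norm_I, one_mul]

lemma norm_sum_ofReal_mul_le {ι : Type*} (s : Finset ι) (c : ι → ℝ) (hc : ∀ i, 0 ≤ c i)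
    (z : ι → ℂ) : ‖∑ i ∈ s, (c i : ℂ) * z i‖ ≤ ∑ i ∈ s, c i * ‖z i‖ :=
  (norm_sum_le _ _).trans_eq <| Finset.sum_congr rfl fun i _ => by
    rw [norm_mul, Complex.norm_of_nonneg (hc i)]

lemma roiX_sum_smul_le {ι : Type*} (s : Finset ι) (c : ι → ℝ) (hc : ∀ i, 0 ≤ c i)
    (σ : ι → Matrix (Fin 2) (Fin 2) ℂ) :
    roiX (∑ i ∈ s, (c i : ℂ) • σ i) ≤ ∑ i ∈ s, c i * roiX (σ i) := by
  simp only [roiX_eq, Matrix.sum_apply, Matrix.smul_apply, smul_eq_mul, ← Finset.sum_sub_distrib,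
    ← mul_sub]
  exact norm_sum_ofReal_mul_le s c hc _

lemma roiY_sum_smul_le {ι : Type*} (s : Finset ι) (c : ι → ℝ) (hc : ∀ i, 0 ≤ c i)
    (σ : ι → Matrix (Fin 2) (Fin 2) ℂ) :
    roiY (∑ i ∈ s, (c i : ℂ) • σ i) ≤ ∑ i ∈ s, c i * roiY (σ i) := by
  simp only [roiY_eq, Matrix.sum_apply, Matrix.smul_apply, smul_eq_mul, ← Finset.sum_add_distrib,
    ← mul_add]
  exact norm_sum_ofReal_mul_le s c hc _

lemma Matrix.PosSemidef.normSq_apply_zero_one_le {ρ : Matrix (Fin 2) (Fin 2) ℂ}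
    (hρ : ρ.PosSemidef) : Complex.normSq (ρ 0 1) ≤ (ρ 0 0).re * (ρ 1 1).re := by
  have hdet := hρ.det_nonneg
  have h10 : ρ 1 0 = star (ρ 0 1) := (hρ.1.apply 1 0).symm
  have h00 := (Complex.nonneg_iff.1 (hρ.diag_nonneg (i := 0))).2
  have h11 := (Complex.nonneg_iff.1 (hρ.diag_nonneg (i := 1))).2
  rw [det_fin_two, h10, Complex.le_def] at hdet
  simp only [Complex.zero_re, Complex.sub_re, Complex.mul_re, Complex.star_def, Complex.conj_re,
    Complex.conj_im, ← h00, ← h11] at hdet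
  rw [Complex.normSq_apply]
  linarith [hdet.1]

lemma roiX_add_roiY_le_sqrt_two {ρ : Matrix (Fin 2) (Fin 2) ℂ} (hρ : ρ.PosSemidef)
    (hρtr : ρ.trace = 1) : roiX ρ + roiY ρ ≤ √2 := by
  have h10 : ρ 1 0 = star (ρ 0 1) := (hρ.1.apply 1 0).symm
  have htr : (ρ 0 0).re + (ρ 1 1).re = 1 := by
    simpa [trace_fin_two] using congrArg Complex.re hρtr
  have hnorm := hρ.normSq_apply_zero_one_le
  rw [Complex.normSq_apply] at hnorm
  rw [roiX_eq, roiY_eq, h10, Complex.star_def, ← neg_sub, norm_neg, Complex.sub_conj,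
    Complex.add_conj]
  simp only [norm_mul, Complex.norm_real, Complex.norm_I, mul_one, Real.norm_eq_abs, abs_two]
  rw [Real.le_sqrt (by positivity) zero_le_two]
  nlinarith [sq_abs (ρ 0 1).re, sq_abs (ρ 0 1).im, sq_nonneg (|(ρ 0 1).re| - |(ρ 0 1).im|),
    sq_nonneg ((ρ 0 0).re - (ρ 1 1).re)]

/-- any assemblage admitting a local hidden state model satisfies the
imaginarity steering inequality. -/
theorem stmt7 {Λ : Type*} [Fintype Λ] (p qx qy : Λ → ℝ)
    (ρ : Λ → Matrix (Fin 2) (Fin 2) ℂ)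
    (hp : ∀ l, 0 ≤ p l) (hpsum : ∑ l, p l = 1)
    (hρ : ∀ l, (ρ l).PosSemidef) (hρtr : ∀ l, (ρ l).trace = 1)
    (hqx0 : ∀ l, 0 ≤ qx l) (hqx1 : ∀ l, qx l ≤ 1)
    (hqy0 : ∀ l, 0 ≤ qy l) (hqy1 : ∀ l, qy l ≤ 1) :
    roiY (∑ l, ((p l * qx l : ℝ) : ℂ) • ρ l)
      + roiY (∑ l, ((p l * (1 - qx l) : ℝ) : ℂ) • ρ l)
      + roiX (∑ l, ((p l * qy l : ℝ) : ℂ) • ρ l)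
      + roiX (∑ l, ((p l * (1 - qy l) : ℝ) : ℂ) • ρ l) ≤ Real.sqrt 2 := by
  calc _ ≤ ∑ l, p l * qx l * roiY (ρ l) + ∑ l, p l * (1 - qx l) * roiY (ρ l)
          + ∑ l, p l * qy l * roiX (ρ l) + ∑ l, p l * (1 - qy l) * roiX (ρ l) := by
        gcongr ?_ + ?_ + ?_ + ?_
        · exact roiY_sum_smul_le _ _ (fun l => mul_nonneg (hp l) (hqx0 l)) ρ
        · exact roiY_sum_smul_le _ _ (fun l => mul_nonneg (hp l) (sub_nonneg.2 (hqx1 l))) ρ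
        · exact roiX_sum_smul_le _ _ (fun l => mul_nonneg (hp l) (hqy0 l)) ρ
        · exact roiX_sum_smul_le _ _ (fun l => mul_nonneg (hp l) (sub_nonneg.2 (hqy1 l))) ρ
    _ = ∑ l, p l * (roiX (ρ l) + roiY (ρ l)) := by
        simp only [← Finset.sum_add_distrib]
        exact Finset.sum_congr rfl fun l _ => by ring
    _ ≤ ∑ l, p l * √2 := Finset.sum_le_sum fun l _ =>
        mul_le_mul_of_nonneg_left (roiX_add_roiY_le_sqrt_two (hρ l) (hρtr l)) (hp l)
    _ = √2 := by rw [← Finset.sum_mul, hpsum, one_mul]
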